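/- Let (M,h) be a 3-dimensional Riemannian manifold and let m, ḿ, m̂ be three pairwise-orthogonal unit vector fields. Then the sum of the three 'crossed' shear components vanishes: Σ(ḿ,m̂) + Σ́(m,m̂) + Σ̂(m,ḿ) = 0, where Σ(ḿ,m̂) := ḿ^a m̂^b P^c_a P^d_b ∇_(c m_d) with P the projector orthogonal to m, and similarly for the decorated quantities with respect to ḿ and m̂. -/
import Mathlib


/-!
Pointwise formalization of the kinematic quantities of a unit vector field on a
3-dimensional Riemannian manifold.  At a fixed point, the metric is given by its
covariant components `h`, with inverse `hinv`; (co)vectors are given by their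
covariant components, and `Du a b` denotes the components `∇_a u_b` of the
covariant derivative (w.r.t. the Levi-Civita connection) of the unit covector
field `u`.  Metric compatibility of the Levi-Civita connection together with the
constancy of the scalar products of the triad is encoded through the
hypothesis that `dDot` (the covariant derivative of the scalar product of two of
the triad fields) vanishes.
-/

namespace Stmt0

noncomputable section

abbrev Idx := Fin 3
abbrev Vec := Idx → ℝ
abbrev Ten2 := Idx → Idx → ℝ

/-- Raise an index with the inverse metric: `u^a = h^{ab} u_b`. -/
def raise (hinv : Ten2) (u : Vec) : Vec := fun a => ∑ b, hinv a b * u b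

/-- Scalar product of two covectors: `h^{ab} u_a v_b`. -/
def dotInv (hinv : Ten2) (u v : Vec) : ℝ := ∑ a, ∑ b, hinv a b * u a * v b

/-- Projector orthogonal to the unit covector `u`: `P_{ab} = h_{ab} - u_a u_b`. -/
def proj (h : Ten2) (u : Vec) : Ten2 := fun a b => h a b - u a * u b

/-- Mixed projector `P^c_a = h^{ce} P_{ea}`. -/
def projMix (h hinv : Ten2) (u : Vec) : Ten2 := fun c a => ∑ e, hinv c e * proj h u e a

/-- Expansion tensor `κ_{ab} = P^c_a P^d_b ∇_{(c} u_{d)}`. -/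
def expansion (h hinv : Ten2) (u : Vec) (Du : Ten2) : Ten2 := fun a b =>
  ∑ c, ∑ d, projMix h hinv u c a * projMix h hinv u d b * ((Du c d + Du d c) / 2)

/-- Vorticity tensor `ω_{ab} = P^c_a P^d_b ∇_{[c} u_{d]}`. -/
def vorticity (h hinv : Ten2) (u : Vec) (Du : Ten2) : Ten2 := fun a b =>
  ∑ c, ∑ d, projMix h hinv u c a * projMix h hinv u d b * ((Du c d - Du d c) / 2)

/-- Expansion scalar `κ = P^{cd} κ_{cd}`. -/
def expScalar (h hinv : Ten2) (u : Vec) (Du : Ten2) : ℝ :=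
  ∑ a, ∑ b, ∑ c, ∑ d, hinv a c * hinv b d * proj h u c d * expansion h hinv u Du a b

/-- Shear tensor `Σ_{ab} = κ_{ab} - (1/2) P_{ab} κ`. -/
def shear (h hinv : Ten2) (u : Vec) (Du : Ten2) : Ten2 := fun a b =>
  expansion h hinv u Du a b - (1/2) * proj h u a b * expScalar h hinv u Du

/-- Contraction `T(v,w) = v^a w^b T_{ab}` of a covariant 2-tensor with two
raised covectors. -/
def contr2 (hinv : Ten2) (T : Ten2) (v w : Vec) : ℝ :=
  ∑ a, ∑ b, raise hinv v a * raise hinv w b * T a b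

/-- Covariant derivative of the scalar product `h^{bc} u_b v_c` of two covector
fields: by metric compatibility of the Levi-Civita connection this is
`h^{bc} (∇_a u_b v_c + u_b ∇_a v_c)`. -/
def dDot (hinv : Ten2) (u v : Vec) (Du Dv : Ten2) (a : Idx) : ℝ :=
  ∑ b, ∑ c, hinv b c * (Du a b * v c + u b * Dv a c)

/-- Lowering the raised index gives back the covector. -/
lemma lower_raise (h hinv : Ten2)
    (hinverse : ∀ a b, (∑ c, h a c * hinv c b) = if a = b then 1 else 0)
    (v : Vec) (e : Idx) :
    ∑ a, h e a * raise hinv v a = v e := by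
  have step : ∑ a, h e a * raise hinv v a
      = ∑ f, (∑ a, h e a * hinv a f) * v f := by
    simp only [raise, Fin.sum_univ_three]; ring
  rw [step]
  simp [hinverse]

/-- Contracting with a raised index computes the scalar product. -/
lemma dot_raise (hinv : Ten2) (u v : Vec) :
    ∑ a, u a * raise hinv v a = dotInv hinv u v := by
  simp only [raise, dotInv, Fin.sum_univ_three]; ring

/-- Symmetry of the scalar product. -/
lemma dot_comm (hinv : Ten2) (hinvsym : ∀ a b, hinv a b = hinv b a) (u v : Vec) :
    dotInv hinv u v = dotInv hinv v u := by
  simp only [dotInv, Fin.sum_univ_three]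
  rw [hinvsym 1 0, hinvsym 2 0, hinvsym 2 1]
  ring

/-- Contraction of a raised covector with the mixed projector. -/
lemma raise_projMix (h hinv : Ten2)
    (hinverse : ∀ a b, (∑ c, h a c * hinv c b) = if a = b then 1 else 0)
    (u v : Vec) (c : Idx) :
    ∑ a, raise hinv v a * projMix h hinv u c a
      = raise hinv v c - raise hinv u c * dotInv hinv u v := by
  have step : ∑ a, raise hinv v a * projMix h hinv u c a
      = ∑ e, hinv c e * ((∑ a, h e a * raise hinv v a)
          - u e * (∑ a, u a * raise hinv v a)) := by
    simp only [projMix, proj, Fin.sum_univ_three]; ring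
  rw [step]
  simp only [lower_raise h hinv hinverse v, dot_raise hinv u v]
  simp only [raise, Fin.sum_univ_three]
  ring

/-- Contraction of the projector with two raised covectors. -/
lemma contr_proj (h hinv : Ten2)
    (hsym : ∀ a b, h a b = h b a)
    (hinverse : ∀ a b, (∑ c, h a c * hinv c b) = if a = b then 1 else 0)
    (u v w : Vec) :
    ∑ a, ∑ b, raise hinv v a * raise hinv w b * proj h u a b
      = dotInv hinv v w - dotInv hinv u v * dotInv hinv u w := by
  have step : ∑ a, ∑ b, raise hinv v a * raise hinv w b * proj h u a b
      = (∑ b, raise hinv w b * (∑ a, h b a * raise hinv v a))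
        - (∑ a, u a * raise hinv v a) * (∑ b, u b * raise hinv w b) := by
    simp only [proj, Fin.sum_univ_three]
    rw [hsym 1 0, hsym 2 0, hsym 2 1]
    ring
  rw [step, dot_raise, dot_raise]
  simp only [lower_raise h hinv hinverse v]
  simp only [dotInv, raise, Fin.sum_univ_three]
  ring

/-- The crossed shear component reduces to the symmetrized derivative
contracted with the two raised covectors, whenever the three covectors are
pairwise orthogonal. -/
lemma crossed_shear (h hinv : Ten2)
    (hsym : ∀ a b, h a b = h b a)
    (hinverse : ∀ a b, (∑ c, h a c * hinv c b) = if a = b then 1 else 0)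
    (u v w : Vec) (Du : Ten2)
    (huv : dotInv hinv u v = 0) (huw : dotInv hinv u w = 0)
    (hvw : dotInv hinv v w = 0) :
    contr2 hinv (shear h hinv u Du) v w
      = ∑ c, ∑ d, raise hinv v c * raise hinv w d * ((Du c d + Du d c) / 2) := by
  have split : contr2 hinv (shear h hinv u Du) v w
      = (∑ c, ∑ d, ((Du c d + Du d c) / 2)
            * (∑ a, raise hinv v a * projMix h hinv u c a)
            * (∑ b, raise hinv w b * projMix h hinv u d b))
        - (1/2) * (∑ a, ∑ b, raise hinv v a * raise hinv w b * proj h u a b)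
            * expScalar h hinv u Du := by
    simp only [contr2, shear, expansion, Fin.sum_univ_three]
    ring
  rw [split, contr_proj h hinv hsym hinverse u v w, huv, huw, hvw]
  simp only [raise_projMix h hinv hinverse u, huv, huw, mul_zero, sub_zero]
  simp only [Fin.sum_univ_three]
  ring

/-- `dDot` written in terms of raised covectors. -/
lemma dDot_raise (hinv : Ten2)
    (hinvsym : ∀ a b, hinv a b = hinv b a)
    (u v : Vec) (Du Dv : Ten2) (a : Idx) :
    dDot hinv u v Du Dv a
      = ∑ b, (Du a b * raise hinv v b + Dv a b * raise hinv u b) := by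
  simp only [dDot, raise, Fin.sum_univ_three]
  rw [hinvsym 1 0, hinvsym 2 0, hinvsym 2 1]
  ring

/-- For an orthonormal triad `{m, ḿ, m̂}` on a 3-dimensional
Riemannian manifold, the sum of the three crossed shear components vanishes:
`Σ(ḿ,m̂) + Σ́(m,m̂) + Σ̂(m,ḿ) = 0`. -/
theorem crossed_shear_sum_vanishes
    (h hinv : Ten2)
    (hsym : ∀ a b, h a b = h b a)
    (hinvsym : ∀ a b, hinv a b = hinv b a)
    (hinverse : ∀ a b, (∑ c, h a c * hinv c b) = if a = b then 1 else 0)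
    (m m' m'' : Vec)
    -- orthonormality of the triad
    (hu1 : dotInv hinv m m = 1) (hu2 : dotInv hinv m' m' = 1) (hu3 : dotInv hinv m'' m'' = 1)
    (ho12 : dotInv hinv m m' = 0) (ho13 : dotInv hinv m m'' = 0) (ho23 : dotInv hinv m' m'' = 0)
    (Dm Dm' Dm'' : Ten2)
    -- metric compatibility of the Levi-Civita connection plus constancy of the
    -- scalar products of the orthonormal triad
    (c11 : ∀ a, dDot hinv m m Dm Dm a = 0)
    (c22 : ∀ a, dDot hinv m' m' Dm' Dm' a = 0)
    (c33 : ∀ a, dDot hinv m'' m'' Dm'' Dm'' a = 0)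
    (c12 : ∀ a, dDot hinv m m' Dm Dm' a = 0)
    (c13 : ∀ a, dDot hinv m m'' Dm Dm'' a = 0)
    (c23 : ∀ a, dDot hinv m' m'' Dm' Dm'' a = 0) :
    contr2 hinv (shear h hinv m Dm) m' m''
      + contr2 hinv (shear h hinv m' Dm') m m''
      + contr2 hinv (shear h hinv m'' Dm'') m m' = 0 := by
  have d21 : dotInv hinv m' m = 0 := by rw [dot_comm hinv hinvsym]; exact ho12
  have d31 : dotInv hinv m'' m = 0 := by rw [dot_comm hinv hinvsym]; exact ho13
  have d32 : dotInv hinv m'' m' = 0 := by rw [dot_comm hinv hinvsym]; exact ho23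
  rw [crossed_shear h hinv hsym hinverse m m' m'' Dm ho12 ho13 ho23,
      crossed_shear h hinv hsym hinverse m' m m'' Dm' d21 ho23 ho13,
      crossed_shear h hinv hsym hinverse m'' m m' Dm'' d31 d32 ho12]
  have H1 : ∑ a, raise hinv m'' a
      * (∑ b, (Dm a b * raise hinv m' b + Dm' a b * raise hinv m b)) = 0 := by
    have aux : ∀ a, (∑ b, (Dm a b * raise hinv m' b + Dm' a b * raise hinv m b)) = 0 := by
      intro a; rw [← dDot_raise hinv hinvsym m m' Dm Dm' a]; exact c12 a
    simp [aux]
  have H2 : ∑ a, raise hinv m' a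
      * (∑ b, (Dm a b * raise hinv m'' b + Dm'' a b * raise hinv m b)) = 0 := by
    have aux : ∀ a, (∑ b, (Dm a b * raise hinv m'' b + Dm'' a b * raise hinv m b)) = 0 := by
      intro a; rw [← dDot_raise hinv hinvsym m m'' Dm Dm'' a]; exact c13 a
    simp [aux]
  have H3 : ∑ a, raise hinv m a
      * (∑ b, (Dm' a b * raise hinv m'' b + Dm'' a b * raise hinv m' b)) = 0 := by
    have aux : ∀ a, (∑ b, (Dm' a b * raise hinv m'' b + Dm'' a b * raise hinv m' b)) = 0 := by
      intro a; rw [← dDot_raise hinv hinvsym m' m'' Dm' Dm'' a]; exact c23 a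
    simp [aux]
  simp only [Fin.sum_univ_three] at H1 H2 H3 ⊢
  linear_combination (H1 + H2 + H3) / 2

end
end Stmt0
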